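/- Both τ₁ and τ₂ are maximal tori of N₅,₃, and they are not conjugate under Aut(N₅,₃): there is no Lie algebra automorphism φ of N₅,₃ with {φ ∘ d ∘ φ⁻¹ : d ∈ τ₁} = τ₂. -/

import Mathlib

open Module

def IsSemisimpleEnd {g : Type*} [AddCommGroup g] [Module ℝ g] (f : Module.End ℝ g) : Prop :=
  ∀ p : Submodule ℝ g, (∀ x ∈ p, f x ∈ p) →
    ∃ q : Submodule ℝ g, (∀ x ∈ q, f x ∈ q) ∧ IsCompl p q

def IsTorus {g : Type*} [LieRing g] [LieAlgebra ℝ g]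
    (t : Submodule ℝ (Module.End ℝ g)) : Prop :=
  (∀ f ∈ t, ∀ x y : g, f ⁅x, y⁆ = ⁅f x, y⁆ + ⁅x, f y⁆) ∧
  (∀ f ∈ t, ∀ f' ∈ t, f * f' = f' * f) ∧
  (∀ f ∈ t, IsSemisimpleEnd f)

def IsMaximalTorus {g : Type*} [LieRing g] [LieAlgebra ℝ g]
    (t : Submodule ℝ (Module.End ℝ g)) : Prop :=
  IsTorus t ∧ ∀ t' : Submodule ℝ (Module.End ℝ g), IsTorus t' → t ≤ t' → t' = t

def ConjTorus {g : Type*} [LieRing g] [LieAlgebra ℝ g]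
    (t t' : Submodule ℝ (Module.End ℝ g)) : Prop :=
  ∃ φ : g ≃ₗ⁅ℝ⁆ g,
    (fun d : Module.End ℝ g =>
        (φ.toLinearEquiv.toLinearMap) ∘ₗ d ∘ₗ (φ.symm.toLinearEquiv.toLinearMap)) ''
      (t : Set (Module.End ℝ g)) = (t' : Set (Module.End ℝ g))

set_option linter.unusedSectionVars false

section Aux

open Polynomial

variable {g : Type} [LieRing g] [LieAlgebra ℝ g]

lemma sum_lie' {ι : Type*} (s : Finset ι) (f : ι → g) (y : g) :
    ⁅∑ i ∈ s, f i, y⁆ = ∑ i ∈ s, ⁅f i, y⁆ := by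
  induction s using Finset.cons_induction with
  | empty => simp
  | cons a s ha ih => simp [Finset.sum_cons, add_lie, ih]

lemma lie_sum' {ι : Type*} (s : Finset ι) (f : ι → g) (x : g) :
    ⁅x, ∑ i ∈ s, f i⁆ = ∑ i ∈ s, ⁅x, f i⁆ := by
  induction s using Finset.cons_induction with
  | empty => simp
  | cons a s ha ih => simp [Finset.sum_cons, lie_add, ih]

lemma leibniz_ext (b : Basis (Fin 5) ℝ g) (f : Module.End ℝ g)
    (h : ∀ i j : Fin 5, f ⁅b i, b j⁆ = ⁅f (b i), b j⁆ + ⁅b i, f (b j)⁆) :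
    ∀ x y : g, f ⁅x, y⁆ = ⁅f x, y⁆ + ⁅x, f y⁆ := by
  intro x y
  rw [← b.sum_repr x, ← b.sum_repr y]
  simp only [sum_lie', lie_sum', smul_lie, lie_smul, map_sum, map_smul]
  rw [← Finset.sum_add_distrib]
  refine Finset.sum_congr rfl fun i _ => ?_
  rw [← smul_add, ← Finset.sum_add_distrib]
  refine congrArg _ (Finset.sum_congr rfl fun j _ => ?_)
  rw [h j i]
  module

lemma bridge (f : Module.End ℝ g) (h : f.IsSemisimple) : IsSemisimpleEnd f := by
  intro p hp
  obtain ⟨q, hq, hc⟩ := Module.End.isSemisimple_iff.mp h p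
    ((Module.End.mem_invtSubmodule f).mpr fun x hx => hp x hx)
  exact ⟨q, fun x hx => (Module.End.mem_invtSubmodule f).mp hq hx, hc⟩

lemma diag_ss (b : Basis (Fin 5) ℝ g) (f : Module.End ℝ g) (e : Fin 5 → ℝ)
    (hf : ∀ i, f (b i) = e i • b i) : f.IsSemisimple := by
  set S : Finset ℝ := Finset.image e Finset.univ with hS
  have hsq : Squarefree (∏ μ ∈ S, (X - C μ)) := by
    have : (∏ μ ∈ S, (X - C μ)).Separable :=
      separable_prod_X_sub_C_iff'.mpr fun x _ y _ h => h
    exact this.squarefree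
  apply Module.End.isSemisimple_of_squarefree_aeval_eq_zero hsq
  apply b.ext
  intro i
  have hmem : e i ∈ S := Finset.mem_image_of_mem e (Finset.mem_univ i)
  rw [← Finset.prod_erase_mul S _ hmem, map_mul, Module.End.mul_apply]
  have h0 : (aeval f (X - C (e i))) (b i) = 0 := by
    rw [map_sub, aeval_X, aeval_C, LinearMap.sub_apply, Module.algebraMap_end_apply,
      hf i, sub_self]
  rw [h0, map_zero, LinearMap.zero_apply]

lemma quad_sep (a : ℝ) (ha : a ≠ 0) : (X ^ 2 + C a : ℝ[X]).Separable := by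
  unfold Polynomial.Separable
  rw [derivative_add, derivative_X_pow, derivative_C, add_zero]
  refine ⟨C a⁻¹, -(C (a⁻¹/2) * X), ?_⟩
  ring_nf
  simp only [mul_assoc, ← C_mul]
  rw [inv_mul_cancel₀ ha, show a⁻¹ * (1/2*2) = a⁻¹ by ring, C_1]
  ring

lemma rot_ss (b : Basis (Fin 5) ℝ g) (f : Module.End ℝ g)
    (h0 : f (b 0) = -b 1) (h1 : f (b 1) = b 0) (h2 : f (b 2) = 0)
    (h3 : f (b 3) = -b 4) (h4 : f (b 4) = b 3) : f.IsSemisimple := by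
  have hcop : IsCoprime (X : ℝ[X]) (X ^ 2 + C 1) := ⟨-X, 1, by rw [C_1]; ring⟩
  have hsq : Squarefree (X * (X ^ 2 + C 1) : ℝ[X]) :=
    (Polynomial.separable_X.mul (quad_sep 1 one_ne_zero) hcop).squarefree
  apply Module.End.isSemisimple_of_squarefree_aeval_eq_zero hsq
  apply b.ext
  intro i
  simp only [map_mul, map_add, map_pow, aeval_X, aeval_C, map_one]
  fin_cases i <;>
    simp [Module.End.mul_apply, LinearMap.add_apply, pow_succ, Module.End.one_apply,
      h0, h1, h2, h3, h4, map_neg]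

lemma eig_coord (b : Basis (Fin 5) ℝ g) (d f : Module.End ℝ g) (e : Fin 5 → ℝ)
    (hd : ∀ i, d (b i) = e i • b i) (hc : d * f = f * d) (j i : Fin 5)
    (hij : e i ≠ e j) : b.repr (f (b j)) i = 0 := by
  set v := f (b j) with hv
  have h1 : d v = e j • v := by
    have := congrArg (fun (u : Module.End ℝ g) => u (b j)) hc
    simp only [Module.End.mul_apply] at this
    rw [hv, this, hd j, map_smul]
  have h2 : d v = ∑ k, (e k * b.repr v k) • b k := by
    conv_lhs => rw [← b.sum_repr v]
    rw [map_sum]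
    refine Finset.sum_congr rfl fun k _ => ?_
    rw [map_smul, hd k, smul_smul, mul_comm]
  have h3 : e i * b.repr v i = e j * b.repr v i := by
    have h4 := congrFun (congrArg (fun w => (b.repr w : Fin 5 → ℝ)) h1) i
    have h5 := congrFun (congrArg (fun w => (b.repr w : Fin 5 → ℝ)) h2) i
    simp only [b.repr_sum_self] at h5
    simp only [map_smul, Finsupp.coe_smul, Pi.smul_apply, smul_eq_mul] at h4
    rw [h5] at h4; exact h4
  have h6 : (e i - e j) * b.repr v i = 0 := by ring_nf; linarith
  rcases mul_eq_zero.mp h6 with h | h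
  · exact absurd (sub_eq_zero.mp h) hij
  · exact h

lemma vec1 (b : Basis (Fin 5) ℝ g) (v : g) (j : Fin 5)
    (h : ∀ i, i ≠ j → b.repr v i = 0) : v = b.repr v j • b j := by
  conv_lhs => rw [← b.sum_repr v]
  rw [Finset.sum_eq_single j (fun i _ hij => by rw [h i hij, zero_smul])
    (fun h' => absurd (Finset.mem_univ j) h')]

lemma vec01 (b : Basis (Fin 5) ℝ g) (v : g) (h2 : b.repr v 2 = 0)
    (h3 : b.repr v 3 = 0) (h4 : b.repr v 4 = 0) :
    v = b.repr v 0 • b 0 + b.repr v 1 • b 1 := by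
  conv_lhs => rw [← b.sum_repr v]
  rw [Fin.sum_univ_five, h2, h3, h4]
  simp

lemma trace_formula (b : Basis (Fin 5) ℝ g) (f : Module.End ℝ g) :
    LinearMap.trace ℝ g f = ∑ i, b.repr (f (b i)) i := by
  rw [LinearMap.trace_eq_matrix_trace ℝ b f]
  simp [Matrix.trace, Matrix.diag, LinearMap.toMatrix_apply]

section WithBracket

variable (b : Basis (Fin 5) ℝ g)
  (h1 : ⁅b 0, b 1⁆ = b 2) (h2 : ⁅b 0, b 2⁆ = b 3) (h3 : ⁅b 1, b 2⁆ = b 4)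
  (h4 : ⁅b 0, b 3⁆ = 0) (h5 : ⁅b 0, b 4⁆ = 0) (h6 : ⁅b 1, b 3⁆ = 0)
  (h7 : ⁅b 1, b 4⁆ = 0) (h8 : ⁅b 2, b 3⁆ = 0) (h9 : ⁅b 2, b 4⁆ = 0)
  (h10 : ⁅b 3, b 4⁆ = 0)

include h1 h2 h3 h4 h5 h6 h7 h8 h9 h10 in
lemma diag_der (f : Module.End ℝ g) (e : Fin 5 → ℝ) (hf : ∀ i, f (b i) = e i • b i)
    (he2 : e 2 = e 0 + e 1) (he3 : e 3 = e 0 + e 2) (he4 : e 4 = e 1 + e 2) :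
    ∀ i j : Fin 5, f ⁅b i, b j⁆ = ⁅f (b i), b j⁆ + ⁅b i, f (b j)⁆ := by
  have r1 : ⁅b 1, b 0⁆ = -b 2 := by rw [← lie_skew, h1]
  have r2 : ⁅b 2, b 0⁆ = -b 3 := by rw [← lie_skew, h2]
  have r3 : ⁅b 2, b 1⁆ = -b 4 := by rw [← lie_skew, h3]
  have r4 : ⁅b 3, b 0⁆ = 0 := by rw [← lie_skew, h4, neg_zero]
  have r5 : ⁅b 4, b 0⁆ = 0 := by rw [← lie_skew, h5, neg_zero]
  have r6 : ⁅b 3, b 1⁆ = 0 := by rw [← lie_skew, h6, neg_zero]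
  have r7 : ⁅b 4, b 1⁆ = 0 := by rw [← lie_skew, h7, neg_zero]
  have r8 : ⁅b 3, b 2⁆ = 0 := by rw [← lie_skew, h8, neg_zero]
  have r9 : ⁅b 4, b 2⁆ = 0 := by rw [← lie_skew, h9, neg_zero]
  have r10 : ⁅b 4, b 3⁆ = 0 := by rw [← lie_skew, h10, neg_zero]
  intro i j
  fin_cases i <;> fin_cases j <;>
    simp [hf, h1, h2, h3, h4, h5, h6, h7, h8, h9, h10, r1, r2, r3, r4, r5, r6, r7,
      r8, r9, r10, lie_self, smul_lie, lie_smul, map_zero, map_smul, smul_zero, lie_zero,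
      zero_lie, he2, he3, he4, map_neg, smul_neg, neg_zero, add_zero, zero_add] <;>
    (try module)

include h1 h2 h3 h4 h5 h6 h7 h8 h9 h10 in
lemma s_der (f : Module.End ℝ g)
    (v0 : f (b 0) = -b 1) (v1 : f (b 1) = b 0) (v2 : f (b 2) = 0)
    (v3 : f (b 3) = -b 4) (v4 : f (b 4) = b 3) :
    ∀ i j : Fin 5, f ⁅b i, b j⁆ = ⁅f (b i), b j⁆ + ⁅b i, f (b j)⁆ := by
  have r1 : ⁅b 1, b 0⁆ = -b 2 := by rw [← lie_skew, h1]
  have r2 : ⁅b 2, b 0⁆ = -b 3 := by rw [← lie_skew, h2]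
  have r3 : ⁅b 2, b 1⁆ = -b 4 := by rw [← lie_skew, h3]
  have r4 : ⁅b 3, b 0⁆ = 0 := by rw [← lie_skew, h4, neg_zero]
  have r5 : ⁅b 4, b 0⁆ = 0 := by rw [← lie_skew, h5, neg_zero]
  have r6 : ⁅b 3, b 1⁆ = 0 := by rw [← lie_skew, h6, neg_zero]
  have r7 : ⁅b 4, b 1⁆ = 0 := by rw [← lie_skew, h7, neg_zero]
  have r8 : ⁅b 3, b 2⁆ = 0 := by rw [← lie_skew, h8, neg_zero]
  have r9 : ⁅b 4, b 2⁆ = 0 := by rw [← lie_skew, h9, neg_zero]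
  have r10 : ⁅b 4, b 3⁆ = 0 := by rw [← lie_skew, h10, neg_zero]
  intro i j
  fin_cases i <;> fin_cases j <;>
    simp [v0, v1, v2, v3, v4, h1, h2, h3, h4, h5, h6, h7, h8, h9, h10, r1, r2, r3,
      r4, r5, r6, r7, r8, r9, r10, lie_self, map_zero, map_neg, neg_lie, lie_neg,
      neg_zero, add_zero, zero_add, neg_neg, zero_lie, lie_zero] <;>
    (try module)

include h1 h2 h3 in
lemma tau1_key (a₁ a₂ f : Module.End ℝ g)
    (ha₁ : ∀ i, a₁ (b i) = (![1,0,1,2,1] : Fin 5 → ℝ) i • b i)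
    (ha₂ : ∀ i, a₂ (b i) = (![0,1,1,1,2] : Fin 5 → ℝ) i • b i)
    (hder : ∀ x y : g, f ⁅x, y⁆ = ⁅f x, y⁆ + ⁅x, f y⁆)
    (hc1 : a₁ * f = f * a₁) (hc2 : a₂ * f = f * a₂) :
    ∃ x y : ℝ, x • a₁ + y • a₂ = f := by
  set c0 := b.repr (f (b 0)) 0 with hc0
  set c1 := b.repr (f (b 1)) 1 with hc1'
  have hb0 : f (b 0) = c0 • b 0 := by
    apply vec1
    intro i hi
    fin_cases i
    · exact absurd rfl hi
    · exact eig_coord b a₁ f _ ha₁ hc1 0 1 (by simp only [Matrix.cons_val]; norm_num)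
    · exact eig_coord b a₂ f _ ha₂ hc2 0 2 (by simp only [Matrix.cons_val]; norm_num)
    · exact eig_coord b a₁ f _ ha₁ hc1 0 3 (by simp only [Matrix.cons_val]; norm_num)
    · exact eig_coord b a₂ f _ ha₂ hc2 0 4 (by simp only [Matrix.cons_val]; norm_num)
  have hb1 : f (b 1) = c1 • b 1 := by
    apply vec1
    intro i hi
    fin_cases i
    · exact eig_coord b a₁ f _ ha₁ hc1 1 0 (by simp only [Matrix.cons_val]; norm_num)
    · exact absurd rfl hi
    · exact eig_coord b a₁ f _ ha₁ hc1 1 2 (by simp only [Matrix.cons_val]; norm_num)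
    · exact eig_coord b a₁ f _ ha₁ hc1 1 3 (by simp only [Matrix.cons_val]; norm_num)
    · exact eig_coord b a₁ f _ ha₁ hc1 1 4 (by simp only [Matrix.cons_val]; norm_num)
  have hb2 : f (b 2) = (c0 + c1) • b 2 := by
    rw [← h1, hder, hb0, hb1, smul_lie, lie_smul, h1]
    module
  have hb3 : f (b 3) = (2*c0 + c1) • b 3 := by
    rw [← h2, hder, hb0, hb2, smul_lie, lie_smul, h2]
    module
  have hb4 : f (b 4) = (c0 + 2*c1) • b 4 := by
    rw [← h3, hder, hb1, hb2, smul_lie, lie_smul, h3]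
    module
  refine ⟨c0, c1, ?_⟩
  apply b.ext
  intro i
  fin_cases i <;>
    simp [ha₁, ha₂, hb0, hb1, hb2, hb3, hb4] <;> module

include h1 h2 h3 in
lemma tau2_key (a₁ a₂ f : Module.End ℝ g)
    (ha₁ : ∀ i, a₁ (b i) = (![1,1,2,3,3] : Fin 5 → ℝ) i • b i)
    (s0 : a₂ (b 0) = -b 1) (s1 : a₂ (b 1) = b 0) (s2 : a₂ (b 2) = 0)
    (s3 : a₂ (b 3) = -b 4) (s4 : a₂ (b 4) = b 3)
    (hder : ∀ x y : g, f ⁅x, y⁆ = ⁅f x, y⁆ + ⁅x, f y⁆)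
    (hc1 : a₁ * f = f * a₁) (hc2 : a₂ * f = f * a₂) :
    ∃ x y : ℝ, x • a₁ + y • a₂ = f := by
  set al := b.repr (f (b 0)) 0 with hal
  set be := b.repr (f (b 0)) 1 with hbe
  have hb0 : f (b 0) = al • b 0 + be • b 1 := by
    apply vec01
    · exact eig_coord b a₁ f _ ha₁ hc1 0 2 (by simp only [Matrix.cons_val]; norm_num)
    · exact eig_coord b a₁ f _ ha₁ hc1 0 3 (by simp only [Matrix.cons_val]; norm_num)
    · exact eig_coord b a₁ f _ ha₁ hc1 0 4 (by simp only [Matrix.cons_val]; norm_num)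
  have hb1 : f (b 1) = -be • b 0 + al • b 1 := by
    have key : f (a₂ (b 0)) = a₂ (f (b 0)) := by
      have := congrArg (fun (u : Module.End ℝ g) => u (b 0)) hc2
      simpa [Module.End.mul_apply] using this.symm
    rw [s0, map_neg, hb0] at key
    have : f (b 1) = -(a₂ (al • b 0 + be • b 1)) := by rw [← key, neg_neg]
    rw [this, map_add, map_smul, map_smul, s0, s1]
    module
  have hb2 : f (b 2) = (2*al) • b 2 := by
    rw [← h1, hder, hb0, hb1]
    simp only [add_lie, lie_add, smul_lie, lie_smul, lie_self, smul_zero, h1, h2, h3]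
    module
  have hb3 : f (b 3) = (3*al) • b 3 + be • b 4 := by
    rw [← h2, hder, hb0, hb2]
    simp only [add_lie, lie_add, smul_lie, lie_smul, lie_self, smul_zero, h1, h2, h3]
    module
  have hb4 : f (b 4) = -be • b 3 + (3*al) • b 4 := by
    rw [← h3, hder, hb1, hb2]
    simp only [add_lie, lie_add, smul_lie, lie_smul, lie_self, smul_zero, h1, h2, h3]
    module
  refine ⟨al, -be, ?_⟩
  apply b.ext
  intro i
  fin_cases i <;>
    simp [ha₁, s0, s1, s2, s3, s4, hb0, hb1, hb2, hb3, hb4] <;> module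

end WithBracket

lemma span_pair_torus (a₁ a₂ : Module.End ℝ g)
    (hder₁ : ∀ x y : g, a₁ ⁅x, y⁆ = ⁅a₁ x, y⁆ + ⁅x, a₁ y⁆)
    (hder₂ : ∀ x y : g, a₂ ⁅x, y⁆ = ⁅a₂ x, y⁆ + ⁅x, a₂ y⁆)
    (hcomm : a₁ * a₂ = a₂ * a₁)
    (hss : ∀ x y : ℝ, (x • a₁ + y • a₂).IsSemisimple) :
    IsTorus (Submodule.span ℝ {a₁, a₂}) := by
  refine ⟨?_, ?_, ?_⟩
  · rintro f hf x y
    obtain ⟨u, v, rfl⟩ := Submodule.mem_span_pair.mp hf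
    simp only [LinearMap.add_apply, LinearMap.smul_apply, hder₁ x y, hder₂ x y]
    simp only [add_lie, lie_add, smul_lie, lie_smul]
    module
  · rintro f hf f' hf'
    obtain ⟨u, v, rfl⟩ := Submodule.mem_span_pair.mp hf
    obtain ⟨u', v', rfl⟩ := Submodule.mem_span_pair.mp hf'
    simp only [add_mul, mul_add, smul_mul_assoc, mul_smul_comm, smul_smul, hcomm]
    module
  · rintro f hf
    obtain ⟨u, v, rfl⟩ := Submodule.mem_span_pair.mp hf
    exact bridge _ (hss u v)

lemma span_pair_max (a₁ a₂ : Module.End ℝ g)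
    (htorus : IsTorus (Submodule.span ℝ {a₁, a₂}))
    (hkey : ∀ f : Module.End ℝ g, (∀ x y : g, f ⁅x, y⁆ = ⁅f x, y⁆ + ⁅x, f y⁆) →
      a₁ * f = f * a₁ → a₂ * f = f * a₂ → ∃ x y : ℝ, x • a₁ + y • a₂ = f) :
    IsMaximalTorus (Submodule.span ℝ {a₁, a₂}) := by
  refine ⟨htorus, fun t' ht' hle => ?_⟩
  refine le_antisymm (fun f hf => ?_) hle
  have m1 : a₁ ∈ t' := hle (Submodule.subset_span (Set.mem_insert _ _))
  have m2 : a₂ ∈ t' := hle (Submodule.subset_span (Set.mem_insert_of_mem _ rfl))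
  obtain ⟨x, y, hxy⟩ := hkey f (ht'.1 f hf) (ht'.2.1 a₁ m1 f hf) (ht'.2.1 a₂ m2 f hf)
  rw [← hxy]
  exact Submodule.add_mem _
    (Submodule.smul_mem _ _ (Submodule.subset_span (Set.mem_insert _ _)))
    (Submodule.smul_mem _ _ (Submodule.subset_span (Set.mem_insert_of_mem _ rfl)))

end Aux

set_option maxHeartbeats 2000000 in
theorem tau1_tau2_maximal_not_conjugate
    {g : Type} [LieRing g] [LieAlgebra ℝ g] (b : Basis (Fin 5) ℝ g)
    (h1 : ⁅b 0, b 1⁆ = b 2) (h2 : ⁅b 0, b 2⁆ = b 3) (h3 : ⁅b 1, b 2⁆ = b 4)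
    (h4 : ⁅b 0, b 3⁆ = 0) (h5 : ⁅b 0, b 4⁆ = 0) (h6 : ⁅b 1, b 3⁆ = 0)
    (h7 : ⁅b 1, b 4⁆ = 0) (h8 : ⁅b 2, b 3⁆ = 0) (h9 : ⁅b 2, b 4⁆ = 0)
    (h10 : ⁅b 3, b 4⁆ = 0) :
    IsMaximalTorus (Submodule.span ℝ
        {b.constr ℝ ![b 0, 0, b 2, (2 : ℝ) • b 3, b 4],
         b.constr ℝ ![0, b 1, b 2, b 3, (2 : ℝ) • b 4]}) ∧
    IsMaximalTorus (Submodule.span ℝ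
        {b.constr ℝ ![b 0, b 1, (2 : ℝ) • b 2, (3 : ℝ) • b 3, (3 : ℝ) • b 4],
         b.constr ℝ ![-b 1, b 0, 0, -b 4, b 3]}) ∧
    ¬ ConjTorus
        (Submodule.span ℝ
          {b.constr ℝ ![b 0, 0, b 2, (2 : ℝ) • b 3, b 4],
           b.constr ℝ ![0, b 1, b 2, b 3, (2 : ℝ) • b 4]})
        (Submodule.span ℝ
          {b.constr ℝ ![b 0, b 1, (2 : ℝ) • b 2, (3 : ℝ) • b 3, (3 : ℝ) • b 4],
           b.constr ℝ ![-b 1, b 0, 0, -b 4, b 3]}) := by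
  haveI : FiniteDimensional ℝ g := Module.Finite.of_basis b
  -- generator values
  have hd1 : ∀ i, (b.constr ℝ ![b 0, 0, b 2, (2 : ℝ) • b 3, b 4]) (b i)
      = (![1,0,1,2,1] : Fin 5 → ℝ) i • b i := by
    intro i; fin_cases i <;> simp [Basis.constr_basis]
  have hd2 : ∀ i, (b.constr ℝ ![0, b 1, b 2, b 3, (2 : ℝ) • b 4]) (b i)
      = (![0,1,1,1,2] : Fin 5 → ℝ) i • b i := by
    intro i; fin_cases i <;> simp [Basis.constr_basis]
  have hδ : ∀ i, (b.constr ℝ ![b 0, b 1, (2:ℝ) • b 2, (3:ℝ) • b 3, (3:ℝ) • b 4]) (b i)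
      = (![1,1,2,3,3] : Fin 5 → ℝ) i • b i := by
    intro i; fin_cases i <;> simp [Basis.constr_basis]
  have hs0 : (b.constr ℝ ![-b 1, b 0, 0, -b 4, b 3]) (b 0) = -b 1 := by
    simp [Basis.constr_basis]
  have hs1 : (b.constr ℝ ![-b 1, b 0, 0, -b 4, b 3]) (b 1) = b 0 := by
    simp [Basis.constr_basis]
  have hs2 : (b.constr ℝ ![-b 1, b 0, 0, -b 4, b 3]) (b 2) = 0 := by
    simp [Basis.constr_basis]
  have hs3 : (b.constr ℝ ![-b 1, b 0, 0, -b 4, b 3]) (b 3) = -b 4 := by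
    simp [Basis.constr_basis]
  have hs4 : (b.constr ℝ ![-b 1, b 0, 0, -b 4, b 3]) (b 4) = b 3 := by
    simp [Basis.constr_basis]
  -- derivation properties of generators
  have der_d1 : ∀ x y : g, (b.constr ℝ ![b 0, 0, b 2, (2 : ℝ) • b 3, b 4]) ⁅x, y⁆
      = ⁅(b.constr ℝ ![b 0, 0, b 2, (2 : ℝ) • b 3, b 4]) x, y⁆
        + ⁅x, (b.constr ℝ ![b 0, 0, b 2, (2 : ℝ) • b 3, b 4]) y⁆ :=
    leibniz_ext b _ (diag_der b h1 h2 h3 h4 h5 h6 h7 h8 h9 h10 _ _ hd1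
      (by simp only [Matrix.cons_val]; norm_num) (by simp only [Matrix.cons_val]; norm_num) (by simp only [Matrix.cons_val]; norm_num))
  have der_d2 : ∀ x y : g, (b.constr ℝ ![0, b 1, b 2, b 3, (2 : ℝ) • b 4]) ⁅x, y⁆
      = ⁅(b.constr ℝ ![0, b 1, b 2, b 3, (2 : ℝ) • b 4]) x, y⁆
        + ⁅x, (b.constr ℝ ![0, b 1, b 2, b 3, (2 : ℝ) • b 4]) y⁆ :=
    leibniz_ext b _ (diag_der b h1 h2 h3 h4 h5 h6 h7 h8 h9 h10 _ _ hd2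
      (by simp only [Matrix.cons_val]; norm_num) (by simp only [Matrix.cons_val]; norm_num) (by simp only [Matrix.cons_val]; norm_num))
  have der_δ : ∀ x y : g,
      (b.constr ℝ ![b 0, b 1, (2:ℝ) • b 2, (3:ℝ) • b 3, (3:ℝ) • b 4]) ⁅x, y⁆
      = ⁅(b.constr ℝ ![b 0, b 1, (2:ℝ) • b 2, (3:ℝ) • b 3, (3:ℝ) • b 4]) x, y⁆
        + ⁅x, (b.constr ℝ ![b 0, b 1, (2:ℝ) • b 2, (3:ℝ) • b 3, (3:ℝ) • b 4]) y⁆ :=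
    leibniz_ext b _ (diag_der b h1 h2 h3 h4 h5 h6 h7 h8 h9 h10 _ _ hδ
      (by simp only [Matrix.cons_val]; norm_num) (by simp only [Matrix.cons_val]; norm_num) (by simp only [Matrix.cons_val]; norm_num))
  have der_s : ∀ x y : g, (b.constr ℝ ![-b 1, b 0, 0, -b 4, b 3]) ⁅x, y⁆
      = ⁅(b.constr ℝ ![-b 1, b 0, 0, -b 4, b 3]) x, y⁆
        + ⁅x, (b.constr ℝ ![-b 1, b 0, 0, -b 4, b 3]) y⁆ :=
    leibniz_ext b _ (s_der b h1 h2 h3 h4 h5 h6 h7 h8 h9 h10 _ hs0 hs1 hs2 hs3 hs4)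
  -- commutation of generators
  have comm1 : (b.constr ℝ ![b 0, 0, b 2, (2 : ℝ) • b 3, b 4])
      * (b.constr ℝ ![0, b 1, b 2, b 3, (2 : ℝ) • b 4])
      = (b.constr ℝ ![0, b 1, b 2, b 3, (2 : ℝ) • b 4])
      * (b.constr ℝ ![b 0, 0, b 2, (2 : ℝ) • b 3, b 4]) := by
    apply b.ext
    intro i
    fin_cases i <;> simp [Module.End.mul_apply, hd1, hd2, smul_smul] <;> norm_num
  have comm2 : (b.constr ℝ ![b 0, b 1, (2:ℝ) • b 2, (3:ℝ) • b 3, (3:ℝ) • b 4])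
      * (b.constr ℝ ![-b 1, b 0, 0, -b 4, b 3])
      = (b.constr ℝ ![-b 1, b 0, 0, -b 4, b 3])
      * (b.constr ℝ ![b 0, b 1, (2:ℝ) • b 2, (3:ℝ) • b 3, (3:ℝ) • b 4]) := by
    apply b.ext
    intro i
    fin_cases i <;>
      simp [Module.End.mul_apply, hd1, hd2, hδ, hs0, hs1, hs2, hs3, hs4, map_neg,
        map_smul, smul_smul] <;> norm_num
  -- semisimplicity
  have ss1 : ∀ x y : ℝ, Module.End.IsSemisimple
      (x • (b.constr ℝ ![b 0, 0, b 2, (2 : ℝ) • b 3, b 4])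
      + y • (b.constr ℝ ![0, b 1, b 2, b 3, (2 : ℝ) • b 4])) := by
    intro x y
    apply diag_ss b _ (![x, y, x+y, 2*x+y, x+2*y] : Fin 5 → ℝ)
    intro i
    fin_cases i <;>
      simp [LinearMap.add_apply, LinearMap.smul_apply, hd1, hd2] <;> module
  have ss2 : ∀ x y : ℝ, Module.End.IsSemisimple
      (x • (b.constr ℝ ![b 0, b 1, (2:ℝ) • b 2, (3:ℝ) • b 3, (3:ℝ) • b 4])
      + y • (b.constr ℝ ![-b 1, b 0, 0, -b 4, b 3])) := by
    intro x y
    apply Module.End.IsSemisimple.add_of_commute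
    · show _ = _
      simp only [smul_mul_assoc, mul_smul_comm, comm2]
      rw [smul_comm]
    · apply diag_ss b _ (![x, x, 2*x, 3*x, 3*x] : Fin 5 → ℝ)
      intro i
      fin_cases i <;> simp [LinearMap.smul_apply, hδ] <;> module
    · exact Module.End.IsSemisimple_smul y (rot_ss b _ hs0 hs1 hs2 hs3 hs4)
  have torus1 := span_pair_torus _ _ der_d1 der_d2 comm1 ss1
  have torus2 := span_pair_torus _ _ der_δ der_s comm2 ss2
  refine ⟨?_, ?_, ?_⟩
  · exact span_pair_max _ _ torus1 (fun f hder hc1 hc2 =>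
      tau1_key b h1 h2 h3 _ _ f hd1 hd2 hder hc1 hc2)
  · exact span_pair_max _ _ torus2 (fun f hder hc1 hc2 =>
      tau2_key b h1 h2 h3 _ _ f hδ hs0 hs1 hs2 hs3 hs4 hder hc1 hc2)
  · rintro ⟨φ, hφ⟩
    set d1 : Module.End ℝ g := b.constr ℝ ![b 0, 0, b 2, (2 : ℝ) • b 3, b 4] with hd1def
    set dδ : Module.End ℝ g :=
      b.constr ℝ ![b 0, b 1, (2:ℝ) • b 2, (3:ℝ) • b 3, (3:ℝ) • b 4] with hδdef
    set ds : Module.End ℝ g := b.constr ℝ ![-b 1, b 0, 0, -b 4, b 3] with hsdef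
    set F : Module.End ℝ g :=
      (φ.toLinearEquiv.toLinearMap) ∘ₗ d1 ∘ₗ (φ.symm.toLinearEquiv.toLinearMap) with hF
    have hd1mem : d1 ∈ Submodule.span ℝ
        {d1, b.constr ℝ ![0, b 1, b 2, b 3, (2 : ℝ) • b 4]} :=
      Submodule.subset_span (Set.mem_insert _ _)
    have hFmem : F ∈ Submodule.span ℝ ({dδ, ds} : Set (Module.End ℝ g)) := by
      have himg := Set.mem_image_of_mem
        (fun d : Module.End ℝ g =>
          (φ.toLinearEquiv.toLinearMap) ∘ₗ d ∘ₗ (φ.symm.toLinearEquiv.toLinearMap))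
        (show d1 ∈ (Submodule.span ℝ
          {d1, b.constr ℝ ![0, b 1, b 2, b 3, (2 : ℝ) • b 4]} :
            Set (Module.End ℝ g)) from hd1mem)
      rw [hφ] at himg
      exact himg
    obtain ⟨p, q, hpq⟩ := Submodule.mem_span_pair.mp hFmem
    -- traces of the basic operators
    have trd1 : LinearMap.trace ℝ g d1 = 5 := by
      rw [trace_formula b, Fin.sum_univ_five]
      simp [hd1]; norm_num
    have trd1sq : LinearMap.trace ℝ g (d1 * d1) = 7 := by
      rw [trace_formula b, Fin.sum_univ_five]
      simp [Module.End.mul_apply, hd1, smul_smul]; norm_num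
    have trδ : LinearMap.trace ℝ g dδ = 10 := by
      rw [trace_formula b, Fin.sum_univ_five]
      simp [hδ]; norm_num
    have trs : LinearMap.trace ℝ g ds = 0 := by
      rw [trace_formula b, Fin.sum_univ_five]
      simp [hs0, hs1, hs2, hs3, hs4]
    have trδδ : LinearMap.trace ℝ g (dδ * dδ) = 24 := by
      rw [trace_formula b, Fin.sum_univ_five]
      simp [Module.End.mul_apply, hδ, smul_smul]; norm_num
    have trδs : LinearMap.trace ℝ g (dδ * ds) = 0 := by
      rw [trace_formula b, Fin.sum_univ_five]
      simp [Module.End.mul_apply, hδ, hs0, hs1, hs2, hs3, hs4, map_neg, map_smul]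
      try norm_num
    have trsδ : LinearMap.trace ℝ g (ds * dδ) = 0 := by
      rw [trace_formula b, Fin.sum_univ_five]
      simp [Module.End.mul_apply, hδ, hs0, hs1, hs2, hs3, hs4, map_neg, map_smul]
      try norm_num
    have trss : LinearMap.trace ℝ g (ds * ds) = -4 := by
      rw [trace_formula b, Fin.sum_univ_five]
      simp [Module.End.mul_apply, hs0, hs1, hs2, hs3, hs4, map_neg]
      try norm_num
    -- conjugation invariance
    have hcancel : (φ.symm.toLinearEquiv.toLinearMap) ∘ₗ (φ.toLinearEquiv.toLinearMap)
        = LinearMap.id := by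
      ext x; exact φ.symm_apply_apply x
    have trF : LinearMap.trace ℝ g F = 5 := by
      rw [hF, LinearMap.trace_comp_comm', LinearMap.comp_assoc, hcancel,
        LinearMap.comp_id, trd1]
    have hFF : F * F = (φ.toLinearEquiv.toLinearMap) ∘ₗ (d1 * d1)
        ∘ₗ (φ.symm.toLinearEquiv.toLinearMap) := by
      have hc : ∀ z : g, φ.symm.toLinearEquiv.toLinearMap (φ.toLinearEquiv.toLinearMap z) = z :=
        fun z => φ.symm_apply_apply z
      ext x
      simp only [hF, Module.End.mul_apply, LinearMap.comp_apply, hc]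
    have trFF : LinearMap.trace ℝ g (F * F) = 7 := by
      rw [hFF, LinearMap.trace_comp_comm', LinearMap.comp_assoc, hcancel,
        LinearMap.comp_id, trd1sq]
    -- traces from the τ₂ side
    have e1 : LinearMap.trace ℝ g F = 10 * p := by
      rw [← hpq, map_add, map_smul, map_smul, trδ, trs]
      simp; ring
    have e2 : LinearMap.trace ℝ g (F * F) = 24 * (p * p) - 4 * (q * q) := by
      have hexp : F * F = (p * p) • (dδ * dδ) + ((p * q) • (dδ * ds)
          + ((q * p) • (ds * dδ) + (q * q) • (ds * ds))) := by
        rw [← hpq]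
        simp only [add_mul, mul_add, smul_mul_assoc, mul_smul_comm, smul_smul]
        module
      rw [hexp]
      simp only [map_add, map_smul, trδδ, trδs, trsδ, trss, smul_eq_mul]
      ring
    rw [trF] at e1
    rw [trFF] at e2
    nlinarith [sq_nonneg q, e1, e2]
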